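/- For every x ∈ [1/N, 1], the density-evolution variable message satisfies λ̄^N(x) = exp(−(μ + G_N(p) + 1)·ρ^N(1−x)) ≤ e^{−μ}·q_p(x) < q_p(x). -/

import Mathlib

open Real Filter

noncomputable def qp (p x : ℝ) : ℝ :=
  (Real.sqrt ((1 - p) ^ 2 + 4 * p * x) - (1 - p)) / (2 * p)

noncomputable def aCoeff (p : ℝ) (i : ℕ) : ℝ :=
  (∑ k ∈ Finset.range i, (Nat.choose (2 * i - 1) k : ℝ) * p ^ k) /
    (i * (1 + p) ^ (2 * i - 1))

noncomputable def Gpart (p : ℝ) (N : ℕ) : ℝ := ∑ i ∈ Finset.Icc 1 N, aCoeff p i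

noncomputable def Sp (p x : ℝ) : ℝ := - Real.log (qp p (1 - x))

noncomputable def rhoN (p μ : ℝ) (N : ℕ) (x : ℝ) : ℝ :=
  (μ + (∑ i ∈ Finset.Icc 1 N, aCoeff p i * x ^ i) + x ^ N) / (μ + Gpart p N + 1)

noncomputable def lamBarN (p μ : ℝ) (N : ℕ) (x : ℝ) : ℝ :=
  Real.exp (-(μ + Gpart p N + 1) * rhoN p μ N (1 - x))

noncomputable def deSym (p μ : ℝ) (N : ℕ) (x : ℝ) : ℝ :=
  ((1 - p) + p * lamBarN p μ N x) * lamBarN p μ N x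

noncomputable def cornerMap (p μ : ℝ) (N : ℕ) (α ε₁ ε₂ : ℝ) (y : ℝ) : ℝ :=
  ((1 - p) + p * Real.exp (-(α * (1 - ε₁)))) *
    Real.exp (-(α * (1 - ε₂)) * rhoN p μ N (1 - y))

/-!
Put `y = 1 - x`. The claim says `-log q_p(1 - y) ≤ ∑_{i ≤ N} a_i y^i + y^N`, and both sides vanish
at `y = 0`, so it suffices to compare derivatives. The derivative of `-log q_p(1 - y)` is
`∑_m b_m y^m` with `b_m = (m + 1) a_{m+1}`: this comes from
`b_m = 1/2 + (1 - p)/(2(1 + p)) ∑_{n ≤ m} C(2n, n) (p/(1 + p)²)^n`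
and `∑_n C(2n, n) t^n = (1 - 4t)^{-1/2}`. As `b_m` is a binomial probability, `b_m ≤ 1`, so the
tail of this series beyond `N` is at most `y^N / (1 - y) ≤ N y^{N-1}`, the derivative of `y^N`,
as long as `y ≤ N / (N + 1)`.
-/

open Finset

lemma two_mul_sum_range_mul_centralBinom_mul (n : ℕ) :
    2 * ∑ k ∈ range (n + 1), k * (k.centralBinom * (n - k).centralBinom) =
      n * ∑ k ∈ range (n + 1), k.centralBinom * (n - k).centralBinom := by
  rw [two_mul, mul_sum]
  nth_rewrite 1 [← sum_range_reflect]
  rw [← sum_add_distrib]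
  refine sum_congr rfl fun k hk => ?_
  have hk : k ≤ n := Nat.lt_succ_iff.mp (mem_range.mp hk)
  rw [show n + 1 - 1 - k = n - k by omega, Nat.sub_sub_self hk, mul_comm (n - k).centralBinom,
    ← add_mul, Nat.sub_add_cancel hk]

theorem sum_range_centralBinom_mul_centralBinom (n : ℕ) :
    ∑ k ∈ range (n + 1), k.centralBinom * (n - k).centralBinom = 4 ^ n := by
  induction n with
  | zero => simp
  | succ n ih =>
    -- `(k + 1) C(k + 1) = 2 (2k + 1) C(k)` turns the weighted sum for `n + 1` into sums for `n`.
    have shift : ∑ k ∈ range (n + 2), k * (k.centralBinom * (n + 1 - k).centralBinom) =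
        2 * (n + 1) * 4 ^ n := by
      rw [sum_range_succ', zero_mul, add_zero, ← ih]
      have hterm : ∀ k ∈ range (n + 1),
          (k + 1) * ((k + 1).centralBinom * (n + 1 - (k + 1)).centralBinom) =
            2 * (2 * k * (k.centralBinom * (n - k).centralBinom) +
              k.centralBinom * (n - k).centralBinom) := by
        intro k _
        rw [show n + 1 - (k + 1) = n - k by omega, ← mul_assoc, Nat.succ_mul_centralBinom_succ]
        ring
      rw [sum_congr rfl hterm, ← mul_sum, sum_add_distrib]
      simp_rw [mul_assoc 2 _ (_ * _)]
      rw [← mul_sum, two_mul_sum_range_mul_centralBinom_mul]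
      ring
    have h := two_mul_sum_range_mul_centralBinom_mul (n + 1)
    rw [shift] at h
    apply Nat.eq_of_mul_eq_mul_left (by omega : 0 < n + 1)
    rw [← h]
    ring

lemma HasSum.sum_range_mul_of_nonneg {f g : ℕ → ℝ} {a b : ℝ} (hf : HasSum f a) (hg : HasSum g b)
    (hf0 : ∀ n, 0 ≤ f n) (hg0 : ∀ n, 0 ≤ g n) :
    HasSum (fun n => ∑ k ∈ range (n + 1), f k * g (n - k)) (a * b) := by
  have hnorm {h : ℕ → ℝ} (hh : Summable h) (h0 : ∀ n, 0 ≤ h n) : Summable fun n => ‖h n‖ := by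
    simpa only [Real.norm_of_nonneg (h0 _)] using hh
  rw [← hf.tsum_eq, ← hg.tsum_eq]
  exact hasSum_sum_range_mul_of_summable_norm (hnorm hf.summable hf0) (hnorm hg.summable hg0)

theorem hasSum_centralBinom_mul_pow {t : ℝ} (ht0 : 0 ≤ t) (ht : 4 * t < 1) :
    HasSum (fun n => (n.centralBinom : ℝ) * t ^ n) (√(1 - 4 * t))⁻¹ := by
  have hterm0 (n : ℕ) : 0 ≤ (n.centralBinom : ℝ) * t ^ n := by positivity
  have hsum : Summable fun n => (n.centralBinom : ℝ) * t ^ n := by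
    refine Summable.of_nonneg_of_le hterm0 (fun n => ?_)
      (summable_geometric_of_lt_one (by positivity) ht)
    rw [mul_pow]
    gcongr
    exact_mod_cast Nat.centralBinom_le_four_pow n
  set f := ∑' n, (n.centralBinom : ℝ) * t ^ n
  have hsq : f * f = (1 - 4 * t)⁻¹ := by
    have hprod := hsum.hasSum.sum_range_mul_of_nonneg hsum.hasSum hterm0 hterm0
    have hconv (n : ℕ) : ∑ k ∈ range (n + 1), (k.centralBinom : ℝ) * t ^ k *
        ((n - k).centralBinom * t ^ (n - k)) = (4 * t) ^ n := by
      have hk : ∀ k ∈ range (n + 1), (k.centralBinom : ℝ) * t ^ k *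
          ((n - k).centralBinom * t ^ (n - k)) =
            ((k.centralBinom * (n - k).centralBinom : ℕ) : ℝ) * t ^ n := by
        intro k hk
        rw [← pow_mul_pow_sub t (Nat.lt_succ_iff.mp (mem_range.mp hk))]
        push_cast
        ring
      rw [sum_congr rfl hk, ← sum_mul, ← Nat.cast_sum, sum_range_centralBinom_mul_centralBinom,
        mul_pow]
      push_cast
      ring
    simp only [hconv] at hprod
    exact hprod.unique (hasSum_geometric_of_lt_one (by positivity) ht)
  have hpos : 0 < f := by
    have := hsum.le_tsum 0 fun n _ => hterm0 n
    simp only [Nat.centralBinom_zero, pow_zero, Nat.cast_one, mul_one] at this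
    linarith
  convert hsum.hasSum
  rw [← Real.sqrt_inv, ← hsq, Real.sqrt_mul_self hpos.le]

noncomputable def bCoeff (p : ℝ) (m : ℕ) : ℝ :=
  (∑ k ∈ range (m + 1), ((2 * m + 1).choose k : ℝ) * p ^ k) / (1 + p) ^ (2 * m + 1)

lemma aCoeff_succ (p : ℝ) (m : ℕ) : aCoeff p (m + 1) = bCoeff p m / (m + 1) := by
  rw [aCoeff, bCoeff, show 2 * (m + 1) - 1 = 2 * m + 1 by omega, div_div]
  push_cast
  ring

lemma sum_Icc_aCoeff_mul_deriv_pow (p : ℝ) (N : ℕ) (y : ℝ) :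
    ∑ i ∈ Icc 1 N, aCoeff p i * (i * y ^ (i - 1)) = ∑ m ∈ range N, bCoeff p m * y ^ m := by
  rw [← Ico_add_one_right_eq_Icc, sum_Ico_eq_sum_range, Nat.add_sub_cancel]
  refine sum_congr rfl fun m _ => ?_
  rw [add_comm 1 m, aCoeff_succ, Nat.add_sub_cancel]
  field_simp
  push_cast
  ring

lemma aCoeff_nonneg {p : ℝ} (hp : 0 ≤ p) (i : ℕ) : 0 ≤ aCoeff p i := by
  unfold aCoeff
  positivity

lemma bCoeff_le_one {p : ℝ} (hp : 0 ≤ p) (m : ℕ) : bCoeff p m ≤ 1 := by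
  rw [bCoeff, div_le_one (by positivity)]
  calc ∑ k ∈ range (m + 1), ((2 * m + 1).choose k : ℝ) * p ^ k
      ≤ ∑ k ∈ range (2 * m + 1 + 1), ((2 * m + 1).choose k : ℝ) * p ^ k :=
        sum_le_sum_of_subset_of_nonneg (range_subset_range.mpr (by omega))
          fun k _ _ => by positivity
    _ = (1 + p) ^ (2 * m + 1) := by
        rw [add_comm 1 p, add_pow]
        simp only [one_pow, mul_one, mul_comm]

lemma sum_range_choose_succ_mul_pow (n m : ℕ) (x : ℝ) :
    ∑ k ∈ range (m + 1), ((n + 1).choose k : ℝ) * x ^ k =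
      ∑ k ∈ range (m + 1), (n.choose k : ℝ) * x ^ k +
        x * ∑ k ∈ range m, (n.choose k : ℝ) * x ^ k := by
  rw [sum_range_succ' _ m, sum_range_succ' (fun k => (n.choose k : ℝ) * x ^ k) m, mul_sum]
  simp only [Nat.choose_succ_succ, Nat.cast_add, Nat.choose_zero_right, add_mul, sum_add_distrib]
  rw [add_comm (∑ i ∈ range m, _ * x ^ (i + 1))]
  simp only [pow_succ]
  rw [show ∑ i ∈ range m, (n.choose i : ℝ) * (x ^ i * x) = ∑ i ∈ range m, x * (n.choose i * x ^ i)
    from sum_congr rfl fun _ _ => by ring]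
  ring

lemma sum_range_choose_two_mul_add_three (m : ℕ) (x : ℝ) :
    ∑ k ∈ range (m + 2), ((2 * m + 3).choose k : ℝ) * x ^ k =
      (1 + x) ^ 2 * ∑ k ∈ range (m + 1), ((2 * m + 1).choose k : ℝ) * x ^ k +
        ((2 * m + 1).choose m : ℝ) * (x ^ (m + 1) - x ^ (m + 2)) := by
  rw [sum_range_choose_succ_mul_pow (2 * m + 2), sum_range_choose_succ_mul_pow (2 * m + 1),
    sum_range_choose_succ_mul_pow (2 * m + 1) m, sum_range_succ _ (m + 1), sum_range_succ _ m,
    Nat.choose_symm_half]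
  ring

lemma centralBinom_succ_eq_two_mul_choose (m : ℕ) :
    (m + 1).centralBinom = 2 * (2 * m + 1).choose m := by
  rw [Nat.centralBinom_eq_two_mul_choose, show 2 * (m + 1) = 2 * m + 1 + 1 by ring,
    Nat.choose_succ_succ', Nat.choose_symm_half]
  ring

lemma bCoeff_succ {p : ℝ} (hp : 1 + p ≠ 0) (m : ℕ) :
    bCoeff p (m + 1) = bCoeff p m +
      (1 - p) / (2 * (1 + p)) * ((m + 1).centralBinom * (p / (1 + p) ^ 2) ^ (m + 1)) := by
  rw [bCoeff, bCoeff, show 2 * (m + 1) + 1 = 2 * m + 3 by ring,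
    sum_range_choose_two_mul_add_three, centralBinom_succ_eq_two_mul_choose, div_pow, ← pow_mul]
  push_cast
  field_simp
  ring

lemma bCoeff_eq {p : ℝ} (hp : 1 + p ≠ 0) (m : ℕ) :
    bCoeff p m = 1 / 2 + (1 - p) / (2 * (1 + p)) *
      ∑ n ∈ range (m + 1), (n.centralBinom : ℝ) * (p / (1 + p) ^ 2) ^ n := by
  induction m with
  | zero =>
    simp only [bCoeff, zero_add, range_one, mul_zero, sum_singleton, Nat.choose_succ_self_right,
      Nat.cast_one, pow_zero, mul_one, pow_one, one_div, Nat.centralBinom_zero]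
    field_simp
    ring
  | succ m ih => rw [bCoeff_succ hp, ih, sum_range_succ _ (m + 1)]; ring

noncomputable def spDeriv (p y : ℝ) : ℝ :=
  (1 + (1 - p) / √((1 - p) ^ 2 + 4 * p * (1 - y))) / (2 * (1 - y))

lemma sqrt_discr_eq {p : ℝ} (hp : 0 < p) (y : ℝ) :
    √((1 - p) ^ 2 + 4 * p * (1 - y)) = (1 + p) * √(1 - 4 * (p / (1 + p) ^ 2 * y)) := by
  have hp1 : 0 < 1 + p := by linarith
  rw [← Real.sqrt_sq hp1.le, ← Real.sqrt_mul (sq_nonneg _), Real.sqrt_sq hp1.le]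
  congr 1
  field_simp
  ring

theorem hasSum_bCoeff_mul_pow {p y : ℝ} (hp : 0 < p) (hy0 : 0 ≤ y) (hy1 : y < 1) :
    HasSum (fun m => bCoeff p m * y ^ m) (spDeriv p y) := by
  set r := p / (1 + p) ^ 2 with hr_def
  have hr : 4 * (r * y) < 1 := by
    have : 4 * r ≤ 1 := by
      rw [← mul_div_assoc, div_le_one (by positivity)]
      nlinarith [sq_nonneg (1 - p)]
    nlinarith
  have hgeom := hasSum_geometric_of_lt_one hy0 hy1
  have hprod := (hasSum_centralBinom_mul_pow (by positivity) hr).sum_range_mul_of_nonneg hgeom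
    (fun n => by positivity) (fun n => by positivity)
  have hpartial (n : ℕ) : ∑ k ∈ range (n + 1), (k.centralBinom : ℝ) * (r * y) ^ k * y ^ (n - k) =
      (∑ k ∈ range (n + 1), (k.centralBinom : ℝ) * r ^ k) * y ^ n := by
    rw [sum_mul]
    refine sum_congr rfl fun k hk => ?_
    rw [← pow_mul_pow_sub y (Nat.lt_succ_iff.mp (mem_range.mp hk)), mul_pow]
    ring
  simp only [hpartial] at hprod
  have hsum := (hgeom.mul_left (1 / 2)).add (hprod.mul_left ((1 - p) / (2 * (1 + p))))
  have hterm : (fun m => bCoeff p m * y ^ m) = fun m => 1 / 2 * y ^ m +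
      (1 - p) / (2 * (1 + p)) * ((∑ k ∈ range (m + 1), (k.centralBinom : ℝ) * r ^ k) * y ^ m) := by
    funext m
    rw [bCoeff_eq (by positivity)]
    ring
  have hval : 1 / 2 * (1 - y)⁻¹ + (1 - p) / (2 * (1 + p)) * ((√(1 - 4 * (r * y)))⁻¹ * (1 - y)⁻¹) =
      spDeriv p y := by
    have hs : 0 < √(1 - 4 * (r * y)) := Real.sqrt_pos.mpr (by linarith)
    have hy : 1 - y ≠ 0 := by linarith
    rw [spDeriv, sqrt_discr_eq hp, ← hr_def]
    field_simp
  rw [hterm, ← hval]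
  exact hsum

lemma sub_sum_range_le_of_hasSum {b : ℕ → ℝ} {y s : ℝ} (hs : HasSum (fun m => b m * y ^ m) s)
    (hb : ∀ m, b m ≤ 1) (hy0 : 0 ≤ y) (hy1 : y < 1) (N : ℕ) :
    s - ∑ m ∈ range N, b m * y ^ m ≤ y ^ N / (1 - y) := by
  refine hasSum_le (fun i => ?_) ((hasSum_nat_add_iff' N).mpr hs)
    ((hasSum_geometric_of_lt_one hy0 hy1).mul_left (y ^ N))
  rw [pow_add, mul_comm (y ^ i)]
  exact mul_le_of_le_one_left (by positivity) (hb _)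

lemma pow_div_one_sub_le {y : ℝ} {N : ℕ} (hN : 1 ≤ N) (hy0 : 0 ≤ y) (hy1 : y < 1)
    (hy : y ≤ N * (1 - y)) : y ^ N / (1 - y) ≤ N * y ^ (N - 1) := by
  obtain ⟨n, rfl⟩ := Nat.exists_eq_add_of_le' hN
  rw [div_le_iff₀ (by linarith), Nat.add_sub_cancel, pow_succ]
  nlinarith [pow_nonneg hy0 n]

section Qp

variable {p : ℝ}

lemma qp_pos (hp : 0 < p) {x : ℝ} (hx : 0 < x) : 0 < qp p x := by
  refine div_pos (sub_pos.mpr ?_) (by positivity)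
  calc 1 - p ≤ |1 - p| := le_abs_self _
    _ = √((1 - p) ^ 2) := (Real.sqrt_sq_eq_abs _).symm
    _ < √((1 - p) ^ 2 + 4 * p * x) := Real.sqrt_lt_sqrt (sq_nonneg _) (by nlinarith)

lemma qp_one (hp : 0 < p) : qp p 1 = 1 := by
  rw [qp, show (1 - p) ^ 2 + 4 * p * 1 = (1 + p) ^ 2 by ring, Real.sqrt_sq (by linarith)]
  field_simp
  ring

/-- `q_p(x)` is the positive root of `p q² + (1 - p) q = x`. -/
lemma qp_mul_sqrt_add (hp : p ≠ 0) {x : ℝ} (hx : 0 ≤ (1 - p) ^ 2 + 4 * p * x) :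
    qp p x * (√((1 - p) ^ 2 + 4 * p * x) + (1 - p)) = 2 * x := by
  rw [qp, div_mul_eq_mul_div, div_eq_iff (by simpa using hp)]
  linear_combination Real.sq_sqrt hx

lemma hasDerivAt_qp (hp : p ≠ 0) {x : ℝ} (hx : 0 < (1 - p) ^ 2 + 4 * p * x) :
    HasDerivAt (qp p) (1 / √((1 - p) ^ 2 + 4 * p * x)) x := by
  have h := ((((hasDerivAt_id x).const_mul (4 * p)).const_add ((1 - p) ^ 2)).sqrt hx.ne').sub_const
    (1 - p) |>.div_const (2 * p)
  refine h.congr_deriv ?_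
  simp only [id]
  field_simp
  ring

lemma hasDerivAt_Sp (hp : 0 < p) {y : ℝ} (hy : y < 1) : HasDerivAt (Sp p) (spDeriv p y) y := by
  have hD : 0 < (1 - p) ^ 2 + 4 * p * (1 - y) := by nlinarith [sq_nonneg (1 - p)]
  have hq := qp_pos hp (sub_pos.mpr hy)
  have h := (((hasDerivAt_qp hp.ne' hD).comp y ((hasDerivAt_id y).const_sub 1)).log hq.ne').neg
  refine h.congr_deriv ?_
  have hs : 0 < √((1 - p) ^ 2 + 4 * p * (1 - y)) := Real.sqrt_pos.mpr hD
  have hy' : 1 - y ≠ 0 := by linarith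
  have hmul := qp_mul_sqrt_add hp.ne' hD.le
  rw [spDeriv, Function.comp_apply]
  set s := √((1 - p) ^ 2 + 4 * p * (1 - y))
  field_simp
  linear_combination -hmul

end Qp

/-- `λ̄^N(x) ≤ e^{-μ} q_p(x)` says exactly that `truncationExcess p N (1 - x) ≥ 0`. -/
noncomputable def truncationExcess (p : ℝ) (N : ℕ) (y : ℝ) : ℝ :=
  ∑ i ∈ Icc 1 N, aCoeff p i * y ^ i + y ^ N - Sp p y

section TruncationExcess

variable {p : ℝ} {N : ℕ}

lemma hasDerivAt_truncationExcess (hp : 0 < p) {y : ℝ} (hy : y < 1) :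
    HasDerivAt (truncationExcess p N)
      (∑ m ∈ range N, bCoeff p m * y ^ m + N * y ^ (N - 1) - spDeriv p y) y := by
  have hsum : HasDerivAt (fun y => ∑ i ∈ Icc 1 N, aCoeff p i * y ^ i)
      (∑ i ∈ Icc 1 N, aCoeff p i * (i * y ^ (i - 1))) y :=
    HasDerivAt.fun_sum fun i _ => (hasDerivAt_pow i y).const_mul (aCoeff p i)
  rw [← sum_Icc_aCoeff_mul_deriv_pow]
  exact (hsum.add (hasDerivAt_pow N y)).sub (hasDerivAt_Sp hp hy)

lemma truncationExcess_zero (hp : 0 < p) (hN : 1 ≤ N) : truncationExcess p N 0 = 0 := by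
  have hpow : ∀ i ∈ Icc 1 N, aCoeff p i * (0 : ℝ) ^ i = 0 := fun i hi => by
    rw [zero_pow (by grind), mul_zero]
  rw [truncationExcess, sum_eq_zero hpow, zero_pow (by omega), Sp, sub_zero, qp_one hp,
    Real.log_one]
  ring

lemma truncationExcess_nonneg (hp : 0 < p) (hN : 1 ≤ N) {y : ℝ} (hy0 : 0 ≤ y)
    (hy : y * (N + 1) ≤ N) : 0 ≤ truncationExcess p N y := by
  set y₀ : ℝ := N / (N + 1)
  have hy₀ : y₀ < 1 := (div_lt_one (by positivity)).mpr (by linarith)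
  have hlt {z : ℝ} (hz : z ∈ Set.Icc 0 y₀) : z < 1 := hz.2.trans_lt hy₀
  have hmono : MonotoneOn (truncationExcess p N) (Set.Icc 0 y₀) := by
    refine monotoneOn_of_hasDerivWithinAt_nonneg (convex_Icc 0 y₀)
      (fun z hz => (hasDerivAt_truncationExcess hp (hlt hz)).continuousAt.continuousWithinAt)
      (fun z hz => (hasDerivAt_truncationExcess hp
        (hlt (interior_subset hz))).hasDerivWithinAt) fun z hz => ?_
    rw [interior_Icc] at hz
    have hz1 : z < 1 := hlt (Set.Ioo_subset_Icc_self hz)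
    have hzN : z ≤ N * (1 - z) := by
      have := (lt_div_iff₀ (by positivity : (0 : ℝ) < N + 1)).mp hz.2
      linarith
    have htail := sub_sum_range_le_of_hasSum (hasSum_bCoeff_mul_pow hp hz.1.le hz1)
      (bCoeff_le_one hp.le) hz.1.le hz1 N
    linarith [pow_div_one_sub_le hN hz.1.le hz1 hzN]
  have hyy₀ : y ≤ y₀ := (le_div_iff₀ (by positivity)).mpr hy
  have h := hmono ⟨le_rfl, hy0.trans hyy₀⟩ ⟨hy0, hyy₀⟩ hy0
  rwa [truncationExcess_zero hp hN] at h

end TruncationExcess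

lemma lamBarN_eq {p μ : ℝ} {N : ℕ} (hden : μ + Gpart p N + 1 ≠ 0) (x : ℝ) :
    lamBarN p μ N x =
      Real.exp (-μ - (∑ i ∈ Icc 1 N, aCoeff p i * (1 - x) ^ i + (1 - x) ^ N)) := by
  rw [lamBarN, rhoN, neg_mul, mul_div_cancel₀ _ hden]
  ring_nf

theorem stmt8_general (p : ℝ) (hp0 : 0 < p) (μ : ℝ) (hμ : 0 < μ)
    (N : ℕ) (hN : 1 ≤ N) :
    ∀ x ∈ Set.Icc (1 / (N : ℝ)) 1,
      lamBarN p μ N x ≤ Real.exp (-μ) * qp p x ∧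
      Real.exp (-μ) * qp p x < qp p x := by
  rintro x ⟨hNx, hx1⟩
  have hN' : (0 : ℝ) < N := by exact_mod_cast hN
  have hx0 : 0 < x := (by positivity : (0 : ℝ) < 1 / N).trans_le hNx
  have hq := qp_pos hp0 hx0
  refine ⟨?_, mul_lt_of_lt_one_left hq (Real.exp_lt_one_iff.mpr (neg_lt_zero.mpr hμ))⟩
  have hxN : 1 ≤ x * N := (div_le_iff₀ hN').mp hNx
  have hexcess := truncationExcess_nonneg hp0 hN (sub_nonneg.mpr hx1) (by nlinarith)
  rw [truncationExcess, Sp, sub_sub_cancel] at hexcess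
  have hG : 0 ≤ Gpart p N := sum_nonneg fun i _ => aCoeff_nonneg hp0.le i
  rw [lamBarN_eq (by positivity), ← Real.exp_log hq, ← Real.exp_add]
  exact Real.exp_le_exp.mpr (by linarith)

theorem stmt8 (p : ℝ) (hp0 : 0 < p) (hp1 : p < 1) (μ : ℝ) (hμ : 0 < μ)
    (N : ℕ) (hN : 1 ≤ N) :
    ∀ x ∈ Set.Icc (1 / (N : ℝ)) 1,
      lamBarN p μ N x ≤ Real.exp (-μ) * qp p x ∧
      Real.exp (-μ) * qp p x < qp p x :=
  stmt8_general p hp0 μ hμ N hN
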